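/- There is an absolute constant K > 0 such that for every finite simple directed graph G=(V,E), every ρ ∈ (0,1] and every real C > 1, min-seed^{(1)}(G,ρ) ≤ K·C·ρ·|V| + Σ_{v ∈ V, d^in(v) < (1/(Cρ))·ln(e/ρ)} (d^in(v) + 1)·exp(−3·C·ρ·d^in(v)). -/
import Mathlib

/-- The in-neighborhood of `v` in the directed graph with edge relation `E`. -/
def inNbr {V : Type*} (E : V → V → Prop) (v : V) : Set V := {u | E u v}

/-- One round of the synchronous reversible cascade on a directed graph with edge
relation `E`: `dactive E ρ S k` is the set of active vertices in round `k`. -/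
def dactive {V : Type*} (E : V → V → Prop) (ρ : ℝ) (S : Set V) : ℕ → Set V
  | 0 => S
  | k + 1 =>
      {v | 0 < (inNbr E v).ncard ∧
        ρ * (inNbr E v).ncard ≤ ((inNbr E v ∩ dactive E ρ S k).ncard : ℝ)} ∪
      {v | v ∈ S ∧ (inNbr E v).ncard = 0}

/-- `dminSeed E ρ k` is the minimum number of seeds activating all vertices in round `k`. -/
noncomputable def dminSeed {V : Type*} (E : V → V → Prop) (ρ : ℝ) (k : ℕ) : ℕ :=
  sInf {m | ∃ S : Set V, S.ncard = m ∧ dactive E ρ S k = Set.univ}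

section Aux

variable {V : Type} [Fintype V] [DecidableEq V]

private lemma csum_powerset (A : Finset V) (a b : ℝ) :
    ∑ T ∈ A.powerset, a ^ T.card * b ^ (A.card - T.card) = (a + b) ^ A.card := by
  have h := Finset.prod_add (fun _ : V => a) (fun _ : V => b) A
  simp only [Finset.prod_const] at h
  rw [h]
  exact Finset.sum_congr rfl fun T hT => by
    rw [Finset.card_sdiff_of_subset (Finset.mem_powerset.mp hT)]

private lemma factor_powerset (N : Finset V) (a b : ℝ) (hab : a + b = 1)
    (g : Finset V → ℝ) :
    ∑ S ∈ (Finset.univ : Finset V).powerset,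
        a ^ S.card * b ^ (Fintype.card V - S.card) * g (S ∩ N)
      = ∑ T ∈ N.powerset, a ^ T.card * b ^ (N.card - T.card) * g T := by
  have key : ∑ S ∈ (Finset.univ : Finset V).powerset,
      a ^ S.card * b ^ (Fintype.card V - S.card) * g (S ∩ N)
      = ∑ x ∈ N.powerset ×ˢ Nᶜ.powerset,
          (a ^ x.1.card * b ^ (N.card - x.1.card) * g x.1) *
            (a ^ x.2.card * b ^ (Nᶜ.card - x.2.card)) := by
    refine Finset.sum_nbij' (fun S => (S ∩ N, S \ N)) (fun x => x.1 ∪ x.2) ?_ ?_ ?_ ?_ ?_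
    · intro S _
      refine Finset.mem_product.mpr ⟨Finset.mem_powerset.mpr Finset.inter_subset_right,
        Finset.mem_powerset.mpr ?_⟩
      intro u hu
      simp only [Finset.mem_sdiff] at hu
      simpa [Finset.mem_compl] using hu.2
    · intro x _
      exact Finset.mem_powerset.mpr (Finset.subset_univ _)
    · intro S _
      ext u
      simp only [Finset.mem_union, Finset.mem_inter, Finset.mem_sdiff]
      tauto
    · intro x hx
      obtain ⟨h1, h2⟩ := Finset.mem_product.mp hx
      rw [Finset.mem_powerset] at h1 h2
      have hx1 : ∀ u ∈ x.1, u ∈ N := fun u hu => h1 hu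
      have hx2 : ∀ u ∈ x.2, u ∉ N := fun u hu => by simpa using h2 hu
      refine Prod.ext ?_ ?_
      · ext u
        simp only [Finset.mem_inter, Finset.mem_union]
        constructor
        · rintro ⟨h | h, hN⟩
          · exact h
          · exact absurd hN (hx2 u h)
        · intro h; exact ⟨Or.inl h, hx1 u h⟩
      · ext u
        simp only [Finset.mem_sdiff, Finset.mem_union]
        constructor
        · rintro ⟨h | h, hN⟩
          · exact absurd (hx1 u h) hN
          · exact h
        · intro h; exact ⟨Or.inr h, hx2 u h⟩
    · intro S _
      have h1 : (S ∩ N).card + (S \ N).card = S.card := Finset.card_inter_add_card_sdiff S N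
      have h2 : (S ∩ N).card ≤ N.card := Finset.card_le_card Finset.inter_subset_right
      have h3 : (S \ N).card ≤ Nᶜ.card := Finset.card_le_card (by
        intro u hu
        simp only [Finset.mem_sdiff] at hu
        simpa [Finset.mem_compl] using hu.2)
      have h4 : N.card + Nᶜ.card = Fintype.card V := Finset.card_add_card_compl N
      have hS : S.card ≤ Fintype.card V := by
        rw [← Finset.card_univ]; exact Finset.card_le_card (Finset.subset_univ S)
      have h5 : Fintype.card V - S.card
          = (N.card - (S ∩ N).card) + (Nᶜ.card - (S \ N).card) := by omega
      have h6 : S.card = (S ∩ N).card + (S \ N).card := h1.symm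
      rw [h5, h6, pow_add, pow_add]
      ring
  rw [key, Finset.sum_product]
  refine Finset.sum_congr rfl fun T hT => ?_
  dsimp only
  rw [← Finset.mul_sum, csum_powerset, hab, one_pow, mul_one]

private lemma tail_bound (N : Finset V) (p r : ℝ) (hp0 : 0 ≤ p) (hp1 : p ≤ 1) :
    ∑ T ∈ N.powerset.filter (fun T => (T.card : ℝ) < r),
        p ^ T.card * (1 - p) ^ (N.card - T.card)
      ≤ (2 : ℝ) ^ r * (1 - p / 2) ^ N.card := by
  have hq : (0:ℝ) ≤ 1 - p := by linarith
  have hterm : ∀ T ∈ N.powerset.filter (fun T => (T.card : ℝ) < r),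
      p ^ T.card * (1 - p) ^ (N.card - T.card)
        ≤ (2:ℝ) ^ r * (p / 2) ^ T.card * (1 - p) ^ (N.card - T.card) := by
    intro T hT
    obtain ⟨-, hTr⟩ := Finset.mem_filter.mp hT
    have e1 : p ^ T.card = (2:ℝ) ^ (T.card : ℕ) * (p/2) ^ T.card := by
      rw [← mul_pow, show (2:ℝ) * (p/2) = p by ring]
    have e2 : ((2:ℝ) ^ (T.card : ℕ)) ≤ (2:ℝ) ^ r := by
      rw [← Real.rpow_natCast 2 T.card]
      exact Real.rpow_le_rpow_of_exponent_le one_le_two hTr.le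
    rw [e1]
    have hnn : (0:ℝ) ≤ (p/2) ^ T.card := by positivity
    have hnn2 : (0:ℝ) ≤ (1 - p) ^ (N.card - T.card) := pow_nonneg hq _
    apply mul_le_mul_of_nonneg_right _ hnn2
    exact mul_le_mul_of_nonneg_right e2 hnn
  calc ∑ T ∈ N.powerset.filter (fun T => (T.card : ℝ) < r),
        p ^ T.card * (1 - p) ^ (N.card - T.card)
      ≤ ∑ T ∈ N.powerset.filter (fun T => (T.card : ℝ) < r),
          (2:ℝ) ^ r * (p / 2) ^ T.card * (1 - p) ^ (N.card - T.card) :=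
        Finset.sum_le_sum hterm
    _ ≤ ∑ T ∈ N.powerset, (2:ℝ) ^ r * (p / 2) ^ T.card * (1 - p) ^ (N.card - T.card) := by
        apply Finset.sum_le_sum_of_subset_of_nonneg (Finset.filter_subset _ _)
        intro T _ _
        have h2r : (0:ℝ) ≤ (2:ℝ) ^ r := (Real.rpow_pos_of_pos two_pos r).le
        have : (0:ℝ) ≤ (p/2) ^ T.card := by positivity
        exact mul_nonneg (mul_nonneg h2r this) (pow_nonneg hq _)
    _ = (2:ℝ) ^ r * ∑ T ∈ N.powerset, (p / 2) ^ T.card * (1 - p) ^ (N.card - T.card) := by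
        rw [Finset.mul_sum]
        exact Finset.sum_congr rfl fun T _ => by ring
    _ = (2:ℝ) ^ r * (p / 2 + (1 - p)) ^ N.card := by rw [csum_powerset]
    _ = (2:ℝ) ^ r * (1 - p / 2) ^ N.card := by ring_nf

private lemma num1 (C ρ : ℝ) (d : ℕ) (hC : 1 < C) (hρ : 0 < ρ) (hp : 20 * C * ρ ≤ 1) :
    (2:ℝ) ^ (ρ * (d:ℝ)) * (1 - 20 * C * ρ / 2) ^ d ≤ Real.exp (-(3 * C * ρ * d)) := by
  have hd0 : (0:ℝ) ≤ (d:ℝ) := Nat.cast_nonneg d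
  have h2 : (2:ℝ) ^ (ρ * (d:ℝ)) = Real.exp (Real.log 2 * (ρ * d)) :=
    Real.rpow_def_of_pos two_pos _
  have h3 : (1 - 20 * C * ρ / 2) ^ d ≤ Real.exp (-(10 * C * ρ)) ^ d := by
    apply pow_le_pow_left₀ (by nlinarith)
    have := Real.add_one_le_exp (-(10 * C * ρ))
    linarith
  have h4 : Real.exp (-(10 * C * ρ)) ^ d = Real.exp (-(10 * C * ρ) * d) :=
    (Real.exp_nat_mul _ d).symm.trans (by rw [mul_comm])
  have h5 : (2:ℝ) ^ (ρ * (d:ℝ)) * (1 - 20 * C * ρ / 2) ^ d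
      ≤ Real.exp (Real.log 2 * (ρ * d) + -(10 * C * ρ) * d) := by
    rw [Real.exp_add, ← h4, h2]
    apply mul_le_mul_of_nonneg_left h3 (Real.exp_nonneg _)
  refine h5.trans (Real.exp_le_exp.mpr ?_)
  have hlog : Real.log 2 ≤ 1 := by
    have := Real.log_two_lt_d9
    linarith
  have hρd : 0 ≤ ρ * d := by positivity
  nlinarith [mul_le_mul_of_nonneg_right hlog hρd, mul_le_mul_of_nonneg_right hC.le hρd]

private lemma num2 (C ρ : ℝ) (d : ℕ) (hC : 1 < C) (hρ0 : 0 < ρ) (hρ1 : ρ ≤ 1)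
    (hp : 20 * C * ρ ≤ 1)
    (hd : 1 / (C * ρ) * Real.log (Real.exp 1 / ρ) ≤ (d:ℝ)) :
    ((d:ℝ) + 1) * Real.exp (-(3 * C * ρ * d)) ≤ C * ρ := by
  have hC0 : 0 < C := by linarith
  have hCρ : 0 < C * ρ := by positivity
  have hL1 : 1 ≤ Real.log (Real.exp 1 / ρ) := by
    rw [Real.log_div (Real.exp_ne_zero 1) hρ0.ne', Real.log_exp]
    have := Real.log_nonpos hρ0.le hρ1
    linarith
  set L := Real.log (Real.exp 1 / ρ) with hLdef
  have hLx : L ≤ C * ρ * d := by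
    have h := mul_le_mul_of_nonneg_left hd hCρ.le
    have heq : C * ρ * (1 / (C * ρ) * L) = L := by field_simp
    rw [heq] at h
    exact h
  have h20 : (20:ℝ) ≤ 1 / (C * ρ) := by
    rw [le_div_iff₀ hCρ]; linarith
  have hd1 : (1:ℝ) ≤ (d:ℝ) := by
    have h1 : (20:ℝ) * 1 ≤ 1 / (C * ρ) * L :=
      mul_le_mul h20 hL1 (by norm_num) (by positivity)
    linarith
  set x := C * ρ * (d:ℝ) with hxdef
  have hx1 : 1 ≤ x := le_trans hL1 hLx
  have hx0 : 0 < x := by linarith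
  set e1 := Real.exp 1 with he1def
  have he1 : (2:ℝ) < e1 := by
    have := Real.exp_one_gt_d9
    rw [he1def]; linarith
  have he10 : (0:ℝ) < e1 := by linarith
  have hsplit : Real.exp (-(3 * C * ρ * d)) = Real.exp (-x) * Real.exp (-(2*x)) := by
    rw [← Real.exp_add]; congr 1; rw [hxdef]; ring
  have h1 : Real.exp (-x) ≤ 1 / x := by
    rw [Real.exp_neg, ← one_div]
    apply one_div_le_one_div_of_le hx0
    have := Real.add_one_le_exp x
    linarith
  have h2 : Real.exp (-(2*x)) ≤ (ρ / e1) ^ 2 := by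
    have hmono : Real.exp (-(2*x)) ≤ Real.exp (-(2*L)) := by
      apply Real.exp_le_exp.mpr; linarith
    have hexpL : Real.exp L = e1 / ρ := Real.exp_log (by positivity)
    have hexpnegL : Real.exp (-L) = ρ / e1 := by
      rw [Real.exp_neg, hexpL, inv_div]
    have : Real.exp (-(2*L)) = (ρ / e1) ^ 2 := by
      rw [show -(2*L) = -L + -L by ring, Real.exp_add, hexpnegL]; ring
    linarith
  have hρe : (0:ℝ) ≤ (ρ / e1) ^ 2 := by positivity
  have hexneg : (0:ℝ) ≤ Real.exp (-x) := (Real.exp_pos _).le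
  have hstep : ((d:ℝ) + 1) * Real.exp (-(3 * C * ρ * d))
      ≤ ((d:ℝ) + 1) * (1 / x * ((ρ / e1) ^ 2)) := by
    rw [hsplit]
    apply mul_le_mul_of_nonneg_left _ (by linarith : (0:ℝ) ≤ (d:ℝ) + 1)
    exact mul_le_mul h1 h2 (Real.exp_pos _).le (by positivity)
  refine hstep.trans ?_
  have h2d : (d:ℝ) + 1 ≤ 2 * d := by linarith
  have hpos : (0:ℝ) ≤ 1 / x * ((ρ / e1) ^ 2) := by positivity
  have hstep2 : ((d:ℝ) + 1) * (1 / x * ((ρ / e1) ^ 2))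
      ≤ (2 * (d:ℝ)) * (1 / x * ((ρ / e1) ^ 2)) :=
    mul_le_mul_of_nonneg_right h2d hpos
  refine hstep2.trans ?_
  have hdne : (d:ℝ) ≠ 0 := by linarith
  have heq : (2 * (d:ℝ)) * (1 / x * ((ρ / e1) ^ 2)) = 2 * ρ / (C * e1 ^ 2) := by
    rw [hxdef]
    field_simp
  rw [heq, div_le_iff₀ (by positivity : (0:ℝ) < C * e1 ^ 2)]
  have h4 : (4:ℝ) ≤ e1 ^ 2 := by nlinarith
  have h5 : (4:ℝ) ≤ C * e1 ^ 2 := by nlinarith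
  nlinarith [mul_le_mul_of_nonneg_left h5 hρ0.le,
    mul_nonneg (mul_nonneg (sub_nonneg.mpr hC.le) hρ0.le) (by positivity : (0:ℝ) ≤ C * e1 ^ 2)]

private lemma act_iff_lemma {V : Type} [Fintype V] [DecidableEq V] (E : V → V → Prop)
    (ρ : ℝ) (Nf : V → Finset V) (hcoe : ∀ v, inNbr E v = ↑(Nf v))
    (S : Finset V) (v : V) :
    v ∈ dactive E ρ (↑S) 1 ↔
      ((0 < (Nf v).card ∧ ρ * (Nf v).card ≤ (((Nf v) ∩ S).card : ℝ)) ∨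
        (v ∈ S ∧ (Nf v).card = 0)) := by
  simp only [dactive, Set.mem_union, Set.mem_setOf_eq, hcoe, ← Finset.coe_inter,
    Set.ncard_coe_finset, Finset.mem_coe]

private lemma seed_bound_lemma {V : Type} [Fintype V] (E : V → V → Prop) (ρ : ℝ)
    (S : Finset V) (hS : dactive E ρ (↑S) 1 = Set.univ) :
    dminSeed E ρ 1 ≤ S.card :=
  Nat.sInf_le ⟨↑S, Set.ncard_coe_finset S, hS⟩

open Classical in
private lemma main_bound {V : Type} [Fintype V] [DecidableEq V] (E : V → V → Prop)
    (ρ C : ℝ) (hρ0 : 0 < ρ) (hρ1 : ρ ≤ 1) (hC : 1 < C)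
    (Nf : V → Finset V) (hcoe : ∀ v, inNbr E v = ↑(Nf v)) :
    (dminSeed E ρ 1 : ℝ) ≤ 40 * C * ρ * (Fintype.card V) +
      ∑ v ∈ Finset.univ.filter
          (fun v => (((Nf v).card : ℝ)) < 1 / (C * ρ) * Real.log (Real.exp 1 / ρ)),
        (((Nf v).card : ℝ) + 1) * Real.exp (-(3 * C * ρ * ((Nf v).card : ℝ))) := by
  classical
  have hC0 : (0:ℝ) < C := by linarith
  have hCρ : 0 < C * ρ := by positivity
  have hL1 : (1:ℝ) ≤ Real.log (Real.exp 1 / ρ) := by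
    rw [Real.log_div (Real.exp_ne_zero 1) hρ0.ne', Real.log_exp]
    linarith [Real.log_nonpos hρ0.le hρ1]
  set thr := 1 / (C * ρ) * Real.log (Real.exp 1 / ρ) with hthr
  have hthr_pos : 0 < thr := by
    rw [hthr]
    have h1 : (0:ℝ) < 1 / (C * ρ) := by positivity
    nlinarith
  set bigSum := ∑ v ∈ Finset.univ.filter (fun v => ((Nf v).card:ℝ) < thr),
      (((Nf v).card:ℝ) + 1) * Real.exp (-(3 * C * ρ * ((Nf v).card:ℝ))) with hbigSum
  have hbig0 : 0 ≤ bigSum := by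
    rw [hbigSum]
    exact Finset.sum_nonneg fun v _ => by positivity
  have hn0 : (0:ℝ) ≤ (Fintype.card V : ℝ) := Nat.cast_nonneg _
  have hceil : ∀ v : V, ⌈ρ * ((Nf v).card:ℝ)⌉₊ ≤ (Nf v).card := by
    intro v
    rw [Nat.ceil_le]
    nlinarith [Nat.cast_nonneg (α := ℝ) (Nf v).card]
  by_cases hmain : 20 * C * ρ ≤ 1/2
  swap
  · -- trivial case: seed everything
    push_neg at hmain
    have huniv : dactive E ρ ((Finset.univ : Finset V) : Set V) 1 = Set.univ := by
      apply Set.eq_univ_of_forall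
      intro v
      rw [act_iff_lemma E ρ Nf hcoe]
      rcases Nat.eq_zero_or_pos (Nf v).card with h | h
      · exact Or.inr ⟨Finset.mem_univ v, h⟩
      · refine Or.inl ⟨h, ?_⟩
        rw [Finset.inter_univ]
        nlinarith [Nat.cast_nonneg (α := ℝ) (Nf v).card]
    have h1 : (dminSeed E ρ 1 : ℝ) ≤ (Fintype.card V : ℝ) := by
      have h := seed_bound_lemma E ρ Finset.univ huniv
      rw [Finset.card_univ] at h
      exact_mod_cast h
    have h2 : (Fintype.card V : ℝ) ≤ 40 * C * ρ * (Fintype.card V) := by nlinarith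
    linarith
  · -- main probabilistic case
    have hp0 : (0:ℝ) < 20 * C * ρ := by positivity
    have hq0 : (0:ℝ) < 1 - 20 * C * ρ := by linarith
    have hpq : 20 * C * ρ + (1 - 20 * C * ρ) = 1 := by ring
    set w : Finset V → ℝ :=
      fun S => (20 * C * ρ) ^ S.card * (1 - 20 * C * ρ) ^ (Fintype.card V - S.card) with hw
    have hwpos : ∀ S : Finset V, 0 < w S := fun S => by simp only [hw]; positivity
    have hw1 : ∑ S ∈ (Finset.univ : Finset V).powerset, w S = 1 := by
      simp only [hw]
      have h := csum_powerset (Finset.univ : Finset V) (20 * C * ρ) (1 - 20 * C * ρ)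
      rw [Finset.card_univ] at h
      rw [h, hpq, one_pow]
    set ind : V → Finset V → ℝ :=
      fun v S => if v ∈ dactive E ρ (↑S : Set V) 1 then 0 else 1 with hind
    set cost : V → ℝ := fun v => ((Nf v).card : ℝ) + 1 with hcost
    set Pf : V → ℝ :=
      fun v => ∑ S ∈ (Finset.univ : Finset V).powerset, w S * ind v S with hPf
    have hind0 : ∀ v S, 0 ≤ ind v S := by
      intro v S; simp only [hind]; split <;> norm_num
    have hind1 : ∀ v S, ind v S ≤ 1 := by
      intro v S; simp only [hind]; split <;> norm_num
    have hcost0 : ∀ v, 0 ≤ cost v := fun v => by simp only [hcost]; positivity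
    have hPf0 : ∀ v, 0 ≤ Pf v := fun v => by
      simp only [hPf]
      exact Finset.sum_nonneg fun S _ => mul_nonneg (hwpos S).le (hind0 v S)
    have hPf1 : ∀ v, Pf v ≤ 1 := by
      intro v
      simp only [hPf]
      calc ∑ S ∈ (Finset.univ : Finset V).powerset, w S * ind v S
          ≤ ∑ S ∈ (Finset.univ : Finset V).powerset, w S * 1 :=
            Finset.sum_le_sum fun S _ =>
              mul_le_mul_of_nonneg_left (hind1 v S) (hwpos S).le
        _ = 1 := by
            simp only [mul_one]
            exact hw1
    have hPexp : ∀ v : V, 0 < (Nf v).card →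
        Pf v ≤ Real.exp (-(3 * C * ρ * ((Nf v).card : ℝ))) := by
      intro v hd
      have hindg : ∀ S : Finset V, ind v S
          = (fun T : Finset V =>
              if ((T.card:ℝ) < ρ * ((Nf v).card:ℝ)) then (1:ℝ) else 0) (S ∩ Nf v) := by
        intro S
        simp only [hind]
        rw [act_iff_lemma E ρ Nf hcoe]
        rw [Finset.inter_comm S (Nf v)]
        by_cases hc : ρ * ((Nf v).card:ℝ) ≤ (((Nf v) ∩ S).card : ℝ)
        · rw [if_pos (Or.inl ⟨hd, hc⟩), if_neg (not_lt.mpr hc)]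
        · rw [if_neg, if_pos (not_le.mp hc)]
          rintro (⟨-, h⟩ | ⟨-, h0⟩)
          · exact hc h
          · exact absurd h0 hd.ne'
      have heq1 : Pf v = ∑ T ∈ (Nf v).powerset,
          (20 * C * ρ) ^ T.card * (1 - 20 * C * ρ) ^ ((Nf v).card - T.card) *
            (if ((T.card:ℝ) < ρ * ((Nf v).card:ℝ)) then (1:ℝ) else 0) := by
        simp only [hPf]
        rw [← factor_powerset (Nf v) (20 * C * ρ) (1 - 20 * C * ρ) hpq
            (fun T => if ((T.card:ℝ) < ρ * ((Nf v).card:ℝ)) then (1:ℝ) else 0)]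
        refine Finset.sum_congr rfl fun S _ => ?_
        rw [hindg S]
      have heq2 : Pf v = ∑ T ∈ (Nf v).powerset.filter
            (fun T => (T.card:ℝ) < ρ * ((Nf v).card:ℝ)),
          (20 * C * ρ) ^ T.card * (1 - 20 * C * ρ) ^ ((Nf v).card - T.card) := by
        rw [heq1, Finset.sum_filter]
        exact Finset.sum_congr rfl fun T _ => by rw [mul_ite, mul_one, mul_zero]
      rw [heq2]
      calc ∑ T ∈ (Nf v).powerset.filter
            (fun T => (T.card:ℝ) < ρ * ((Nf v).card:ℝ)),
          (20 * C * ρ) ^ T.card * (1 - 20 * C * ρ) ^ ((Nf v).card - T.card)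
          ≤ (2:ℝ) ^ (ρ * ((Nf v).card:ℝ)) * (1 - 20 * C * ρ / 2) ^ ((Nf v).card) :=
            tail_bound (Nf v) (20 * C * ρ) (ρ * ((Nf v).card:ℝ)) hp0.le (by linarith)
        _ ≤ Real.exp (-(3 * C * ρ * ((Nf v).card:ℝ))) :=
            num1 C ρ ((Nf v).card) hC hρ0 (by linarith)
    have hsingle : ∀ v : V, ∑ S ∈ (Finset.univ : Finset V).powerset,
        w S * (if v ∈ S then (1:ℝ) else 0) = 20 * C * ρ := by
      intro v
      have hg : ∀ S : Finset V, (if v ∈ S then (1:ℝ) else 0)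
          = (fun T : Finset V => (T.card : ℝ)) (S ∩ {v}) := by
        intro S
        by_cases h : v ∈ S
        · rw [if_pos h]
          have : S ∩ {v} = {v} := by
            ext u
            simp only [Finset.mem_inter, Finset.mem_singleton]
            constructor
            · rintro ⟨-, rfl⟩; rfl
            · rintro rfl; exact ⟨h, rfl⟩
          rw [this]
          simp
        · rw [if_neg h]
          have : S ∩ {v} = ∅ := by
            ext u
            simp only [Finset.mem_inter, Finset.mem_singleton, Finset.notMem_empty,
              iff_false, not_and]
            rintro huS rfl
            exact h huS
          rw [this]
          simp
      calc ∑ S ∈ (Finset.univ : Finset V).powerset, w S * (if v ∈ S then (1:ℝ) else 0)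
          = ∑ S ∈ (Finset.univ : Finset V).powerset,
              (20 * C * ρ) ^ S.card * (1 - 20 * C * ρ) ^ (Fintype.card V - S.card) *
                ((fun T : Finset V => (T.card : ℝ)) (S ∩ {v})) := by
            refine Finset.sum_congr rfl fun S _ => ?_
            rw [hg S]
        _ = ∑ T ∈ ({v} : Finset V).powerset,
              (20 * C * ρ) ^ T.card * (1 - 20 * C * ρ) ^ (({v} : Finset V).card - T.card) *
                ((T.card : ℝ)) :=
            factor_powerset {v} (20 * C * ρ) (1 - 20 * C * ρ) hpq
              (fun T => (T.card : ℝ))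
        _ = 20 * C * ρ := by
            have hps : ({v} : Finset V).powerset = {∅, {v}} := by
              ext T
              simp [Finset.mem_powerset, Finset.subset_singleton_iff]
            rw [hps, Finset.sum_insert
              (Finset.notMem_singleton.mpr (Ne.symm (Finset.singleton_ne_empty v))),
              Finset.sum_singleton]
            simp
    have hEcard : ∑ S ∈ (Finset.univ : Finset V).powerset, w S * (S.card:ℝ)
        = 20 * C * ρ * (Fintype.card V) := by
      have hcard : ∀ S : Finset V, (S.card : ℝ)
          = ∑ u ∈ (Finset.univ : Finset V), (if u ∈ S then (1:ℝ) else 0) := by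
        intro S
        rw [Finset.sum_boole, Finset.filter_mem_eq_inter, Finset.univ_inter]
      calc ∑ S ∈ (Finset.univ : Finset V).powerset, w S * (S.card:ℝ)
          = ∑ S ∈ (Finset.univ : Finset V).powerset, ∑ u ∈ (Finset.univ : Finset V),
              w S * (if u ∈ S then (1:ℝ) else 0) := by
            refine Finset.sum_congr rfl fun S _ => ?_
            rw [hcard S, Finset.mul_sum]
        _ = ∑ u ∈ (Finset.univ : Finset V), ∑ S ∈ (Finset.univ : Finset V).powerset,
              w S * (if u ∈ S then (1:ℝ) else 0) := Finset.sum_comm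
        _ = ∑ _u ∈ (Finset.univ : Finset V), 20 * C * ρ :=
            Finset.sum_congr rfl fun u _ => hsingle u
        _ = 20 * C * ρ * (Fintype.card V) := by
            rw [Finset.sum_const, Finset.card_univ, nsmul_eq_mul]
            ring
    have hEf : ∑ S ∈ (Finset.univ : Finset V).powerset,
        w S * ((S.card:ℝ) + ∑ v ∈ Finset.univ, cost v * ind v S)
        ≤ 21 * C * ρ * (Fintype.card V) + bigSum := by
      have expand : ∑ S ∈ (Finset.univ : Finset V).powerset,
          w S * ((S.card:ℝ) + ∑ v ∈ Finset.univ, cost v * ind v S)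
          = 20 * C * ρ * (Fintype.card V) + ∑ v ∈ Finset.univ, cost v * Pf v := by
        simp only [mul_add, Finset.sum_add_distrib]
        rw [hEcard]
        congr 1
        calc ∑ S ∈ (Finset.univ : Finset V).powerset,
              w S * ∑ v ∈ Finset.univ, cost v * ind v S
              = ∑ S ∈ (Finset.univ : Finset V).powerset, ∑ v ∈ Finset.univ,
                  cost v * (w S * ind v S) := by
                refine Finset.sum_congr rfl fun S _ => ?_
                rw [Finset.mul_sum]
                exact Finset.sum_congr rfl fun v _ => by ring
            _ = ∑ v ∈ Finset.univ, ∑ S ∈ (Finset.univ : Finset V).powerset,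
                  cost v * (w S * ind v S) := Finset.sum_comm
            _ = ∑ v ∈ Finset.univ, cost v * Pf v := by
                refine Finset.sum_congr rfl fun v _ => ?_
                rw [← Finset.mul_sum]
      rw [expand]
      have h1 : ∑ v ∈ Finset.univ.filter (fun v => ((Nf v).card:ℝ) < thr),
          cost v * Pf v ≤ bigSum := by
        rw [hbigSum]
        refine Finset.sum_le_sum fun v _ => ?_
        rcases Nat.eq_zero_or_pos (Nf v).card with h0 | hpos
        · have he1 : (((Nf v).card:ℝ) + 1) * Real.exp (-(3 * C * ρ * ((Nf v).card:ℝ)))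
              = 1 := by rw [h0]; norm_num
          have hc1 : cost v = 1 := by simp only [hcost]; rw [h0]; norm_num
          rw [he1, hc1, one_mul]
          exact hPf1 v
        · calc cost v * Pf v
              ≤ cost v * Real.exp (-(3 * C * ρ * ((Nf v).card:ℝ))) :=
                mul_le_mul_of_nonneg_left (hPexp v hpos) (hcost0 v)
            _ = (((Nf v).card:ℝ) + 1) * Real.exp (-(3 * C * ρ * ((Nf v).card:ℝ))) := by
                simp only [hcost]
      have h2 : ∑ v ∈ Finset.univ.filter (fun v => ¬ (((Nf v).card:ℝ) < thr)),
          cost v * Pf v ≤ C * ρ * (Fintype.card V) := by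
        have hbound : ∀ v ∈ Finset.univ.filter (fun v => ¬ (((Nf v).card:ℝ) < thr)),
            cost v * Pf v ≤ C * ρ := by
          intro v hv
          have hge : thr ≤ ((Nf v).card:ℝ) := not_lt.mp (Finset.mem_filter.mp hv).2
          have hpos : 0 < (Nf v).card := by
            rcases Nat.eq_zero_or_pos (Nf v).card with h0 | h
            · exfalso
              rw [h0] at hge
              simp only [Nat.cast_zero] at hge
              linarith
            · exact h
          calc cost v * Pf v
              ≤ cost v * Real.exp (-(3 * C * ρ * ((Nf v).card:ℝ))) :=
                mul_le_mul_of_nonneg_left (hPexp v hpos) (hcost0 v)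
            _ = (((Nf v).card:ℝ) + 1) * Real.exp (-(3 * C * ρ * ((Nf v).card:ℝ))) := by
                simp only [hcost]
            _ ≤ C * ρ := by
                refine num2 C ρ (Nf v).card hC hρ0 hρ1 (by linarith) ?_
                rw [← hthr]
                exact hge
        calc ∑ v ∈ Finset.univ.filter (fun v => ¬ (((Nf v).card:ℝ) < thr)),
            cost v * Pf v
            ≤ ∑ _v ∈ Finset.univ.filter (fun v => ¬ (((Nf v).card:ℝ) < thr)), C * ρ :=
              Finset.sum_le_sum hbound
          _ = ((Finset.univ.filter (fun v => ¬ (((Nf v).card:ℝ) < thr))).card : ℝ)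
                * (C * ρ) := by rw [Finset.sum_const, nsmul_eq_mul]
          _ ≤ (Fintype.card V : ℝ) * (C * ρ) := by
              have hle : (Finset.univ.filter
                  (fun v => ¬ (((Nf v).card:ℝ) < thr))).card ≤ Fintype.card V := by
                rw [← Finset.card_univ]
                exact Finset.card_le_card (Finset.filter_subset _ _)
              exact mul_le_mul_of_nonneg_right (by exact_mod_cast hle) (by positivity)
          _ = C * ρ * (Fintype.card V) := by ring
      rw [← Finset.sum_filter_add_sum_filter_not Finset.univ
        (fun v => ((Nf v).card:ℝ) < thr) (fun v => cost v * Pf v)]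
      linarith
    have hgood : ∃ S : Finset V, (S.card:ℝ) + ∑ v ∈ Finset.univ, cost v * ind v S
        ≤ 21 * C * ρ * (Fintype.card V) + bigSum := by
      have hne : ((Finset.univ : Finset V).powerset).Nonempty :=
        ⟨∅, Finset.empty_mem_powerset _⟩
      have hsum2 : ∑ S ∈ (Finset.univ : Finset V).powerset,
          w S * ((S.card:ℝ) + ∑ v ∈ Finset.univ, cost v * ind v S)
          ≤ ∑ S ∈ (Finset.univ : Finset V).powerset,
              w S * (21 * C * ρ * (Fintype.card V) + bigSum) := by
        refine hEf.trans (le_of_eq ?_)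
        rw [← Finset.sum_mul, hw1, one_mul]
      obtain ⟨S, -, hS⟩ := Finset.exists_le_of_sum_le hne hsum2
      exact ⟨S, le_of_mul_le_mul_left hS (hwpos S)⟩
    obtain ⟨S, hSf⟩ := hgood
    have hex : ∀ v : V, ∃ Fv : Finset V,
        ((Nf v).card = 0 → Fv = {v}) ∧
          (0 < (Nf v).card → Fv ⊆ Nf v ∧ Fv.card = ⌈ρ * ((Nf v).card:ℝ)⌉₊) := by
      intro v
      rcases Nat.eq_zero_or_pos (Nf v).card with h | h
      · exact ⟨{v}, fun _ => rfl, fun h' => absurd h h'.ne'⟩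
      · obtain ⟨B, hB1, hB2⟩ := Finset.exists_subset_card_eq (hceil v)
        exact ⟨B, fun h0 => absurd h0 h.ne', fun _ => ⟨hB1, hB2⟩⟩
    choose F hF0 hF1 using hex
    set bad := Finset.univ.filter (fun v => v ∉ dactive E ρ (↑S : Set V) 1) with hbad
    set seed := S ∪ bad.biUnion F with hseed
    have hact : dactive E ρ (↑seed : Set V) 1 = Set.univ := by
      apply Set.eq_univ_of_forall
      intro v
      rw [act_iff_lemma E ρ Nf hcoe]
      by_cases hv : v ∈ dactive E ρ (↑S : Set V) 1
      · rcases (act_iff_lemma E ρ Nf hcoe S v).mp hv with ⟨hd, hle⟩ | ⟨hvS, hd⟩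
        · left
          refine ⟨hd, hle.trans ?_⟩
          have hmono : (Nf v ∩ S).card ≤ (Nf v ∩ seed).card := by
            apply Finset.card_le_card
            rw [hseed]
            exact Finset.inter_subset_inter (Finset.Subset.refl _) Finset.subset_union_left
          exact_mod_cast hmono
        · right
          refine ⟨?_, hd⟩
          rw [hseed]
          exact Finset.mem_union_left _ hvS
      · have hvbad : v ∈ bad := by
          rw [hbad]
          exact Finset.mem_filter.mpr ⟨Finset.mem_univ v, hv⟩
        have hFsub : F v ⊆ seed := by
          rw [hseed]
          intro u hu
          exact Finset.mem_union_right _ (Finset.mem_biUnion.mpr ⟨v, hvbad, hu⟩)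
        rcases Nat.eq_zero_or_pos (Nf v).card with hd | hd
        · right
          refine ⟨hFsub ?_, hd⟩
          rw [hF0 v hd]
          exact Finset.mem_singleton_self v
        · left
          obtain ⟨hsub, hcardF⟩ := hF1 v hd
          refine ⟨hd, ?_⟩
          have hsub2 : F v ⊆ Nf v ∩ seed := Finset.subset_inter hsub hFsub
          calc ρ * ((Nf v).card:ℝ) ≤ (⌈ρ * ((Nf v).card:ℝ)⌉₊ : ℝ) := Nat.le_ceil _
            _ = ((F v).card : ℝ) := by rw [hcardF]
            _ ≤ (((Nf v) ∩ seed).card : ℝ) := by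
                exact_mod_cast Finset.card_le_card hsub2
    have hFcost : ∀ v ∈ bad, ((F v).card : ℝ) ≤ cost v := by
      intro v _
      rcases Nat.eq_zero_or_pos (Nf v).card with hd | hd
      · rw [hF0 v hd, Finset.card_singleton]
        simp only [hcost]
        rw [hd]
        norm_num
      · obtain ⟨-, hcardF⟩ := hF1 v hd
        rw [hcardF]
        simp only [hcost]
        have h1 : (⌈ρ * ((Nf v).card:ℝ)⌉₊ : ℝ) ≤ ((Nf v).card : ℝ) := by
          exact_mod_cast hceil v
        linarith
    have hbadsum : ∑ v ∈ bad, cost v = ∑ v ∈ Finset.univ, cost v * ind v S := by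
      rw [hbad, Finset.sum_filter]
      refine Finset.sum_congr rfl fun v _ => ?_
      simp only [hind]
      by_cases h : v ∈ dactive E ρ (↑S : Set V) 1
      · simp [h]
      · simp [h]
    have hseedcard : (seed.card : ℝ) ≤ (S.card:ℝ) + ∑ v ∈ Finset.univ, cost v * ind v S := by
      have h1 : seed.card ≤ S.card + (bad.biUnion F).card := by
        rw [hseed]
        exact Finset.card_union_le _ _
      have h2 : (bad.biUnion F).card ≤ ∑ v ∈ bad, (F v).card := Finset.card_biUnion_le
      have h3 : ((bad.biUnion F).card : ℝ) ≤ ∑ v ∈ bad, cost v := by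
        have h2' := (Nat.cast_le (α := ℝ)).mpr h2
        push_cast at h2'
        exact h2'.trans (Finset.sum_le_sum hFcost)
      have h1' : (seed.card:ℝ) ≤ (S.card:ℝ) + ((bad.biUnion F).card:ℝ) := by
        exact_mod_cast h1
      rw [← hbadsum]
      linarith
    have hmin : (dminSeed E ρ 1 : ℝ) ≤ (seed.card : ℝ) :=
      Nat.cast_le.mpr (seed_bound_lemma E ρ seed hact)
    have hfinal : (dminSeed E ρ 1 : ℝ) ≤ 21 * C * ρ * (Fintype.card V) + bigSum := by
      linarith
    have habs : (0:ℝ) ≤ C * ρ * (Fintype.card V) := by positivity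
    linarith

end Aux

open Classical in
theorem stmt_7 :
    ∃ K : ℝ, 0 < K ∧
      ∀ (V : Type) [Fintype V] (E : V → V → Prop), Irreflexive E →
        ∀ ρ : ℝ, 0 < ρ → ρ ≤ 1 → ∀ C : ℝ, 1 < C →
          (dminSeed E ρ 1 : ℝ) ≤ K * C * ρ * (Fintype.card V) +
            ∑ v ∈ Finset.univ.filter
                (fun v : V =>
                  ((inNbr E v).ncard : ℝ) < 1 / (C * ρ) * Real.log (Real.exp 1 / ρ)),
              (((inNbr E v).ncard : ℝ) + 1) *
                Real.exp (-(3 * C * ρ * ((inNbr E v).ncard : ℝ))) := by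
  refine ⟨40, by norm_num, ?_⟩
  intro V _ E _hE ρ hρ0 hρ1 C hC
  classical
  set Nf : V → Finset V := fun v => Finset.univ.filter (fun u => E u v) with hNf
  have hcoe : ∀ v, inNbr E v = ↑(Nf v) := by
    intro v; ext u; simp [inNbr, hNf]
  have hncard : ∀ v : V, (inNbr E v).ncard = (Nf v).card := by
    intro v; rw [hcoe v, Set.ncard_coe_finset]
  simp only [hncard]
  exact main_bound E ρ C hρ0 hρ1 hC Nf hcoe
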